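/- arXiv:1905.06513 — 2 statements merged into one kernel-verified Lean document; each statement's English description precedes it below -/
import Mathlib

section
/- Let p be an odd prime, r = p^m, and q = r^s with s odd, and let 1 ≤ l ≤ r − 1. If l is even and l belongs to Σ(g, r), then l·(q−1)/(r−1) belongs to Σ(g, q); and if l is odd and l + 1 belongs to Σ(eg, r), then l·(q−1)/(r−1) + 1 belongs to Σ(eg, q). -/
open Finset

/-- Δ_S(a) = ∏_{b ∈ S, b ≠ a} (a − b). -/
def deltaS {F : Type*} [Field F] [DecidableEq F] (S : Finset F) (a : F) : F :=
  ∏ b ∈ S.erase a, (a - b)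

/-- n ∈ Σ(g,q): n is even, n ≥ 2, and there is S ⊆ F_q with |S| = n such that
the quadratic-character values η_q(Δ_S(a)) agree for all a ∈ S
(equivalently, the Δ_S(a) are all squares or all nonsquares). -/
def SigmaG (F : Type*) [Field F] [DecidableEq F] (n : ℕ) : Prop :=
  Even n ∧ 2 ≤ n ∧ ∃ S : Finset F, S.card = n ∧
    ((∀ a ∈ S, IsSquare (deltaS S a)) ∨ (∀ a ∈ S, ¬ IsSquare (deltaS S a)))

/-- n ∈ Σ(eg,q): n is even, n ≥ 2, and there is S ⊆ F_q with |S| = n − 1 such that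
η_q(−Δ_S(a)) = 1, i.e. −Δ_S(a) is a square, for all a ∈ S. -/
def SigmaEG (F : Type*) [Field F] [DecidableEq F] (n : ℕ) : Prop :=
  Even n ∧ 2 ≤ n ∧ ∃ S : Finset F, S.card = n - 1 ∧
    ∀ a ∈ S, IsSquare (-(deltaS S a))

/-! Write `t = (q - 1)/(r - 1)`; it is odd and `≡ 1 (mod p)`. Embed `F_r` into `F_q` and translate
`S` off `0`, so that its image `S₀` consists of `(r - 1)`-th roots of unity. Each `b ∈ S₀` then has
exactly `t` distinct `t`-th roots in `F_q`, and the set `S'` of all of them has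
`∏_{β ∈ S'} (X - β) = f(X^t)` with `f = ∏_{b ∈ S₀} (X - b)`. Since `Δ_T(a) = g'(a)` for
`g = ∏_{b ∈ T} (X - b)`, the chain rule gives `Δ_{S'}(α) = t α^(t-1) Δ_{S₀}(α^t) = α^(t-1) Δ_{S₀}(α^t)`, and `α^(t-1)` is a square since
`t` is odd. Finally, by Euler's criterion an element of `F_r` is a square in `F_q` iff it is one
in `F_r`, again because `t` is odd. -/

open Polynomial

section deltaS

variable {F : Type*} [Field F] [DecidableEq F]

lemma deltaS_eq_eval_derivative {S : Finset F} {a : F} (ha : a ∈ S) :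
    deltaS S a = (derivative (∏ b ∈ S, (X - C b))).eval a := by
  rw [prod_eq_multiset_prod, eval_multiset_prod_X_sub_C_derivative ha, deltaS,
    prod_eq_multiset_prod, erase_val]

lemma deltaS_image_sub_const (S : Finset F) (c a : F) :
    deltaS (S.image (· - c)) (a - c) = deltaS S a := by
  rw [deltaS, ← image_erase sub_left_injective, prod_image fun _ _ _ _ h => sub_left_injective h]
  exact prod_congr rfl fun _ _ => sub_sub_sub_cancel_right _ _ _

lemma deltaS_image_ringHom {K : Type*} [Field K] [DecidableEq K] (φ : F →+* K) (S : Finset F)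
    (a : F) : deltaS (S.image φ) (φ a) = φ (deltaS S a) := by
  rw [deltaS, ← image_erase φ.injective, prod_image fun _ _ _ _ h => φ.injective h, deltaS,
    map_prod]
  simp only [map_sub]

end deltaS

section FiniteField

variable {F : Type*} [Field F] [Fintype F]

lemma pos_of_mul_eq_card_sub_one {d t : ℕ} (hdt : Fintype.card F - 1 = d * t) : 0 < t := by
  have := Fintype.one_lt_card (α := F)
  exact Nat.pos_of_mul_pos_left (a := d) (by omega)

lemma splits_X_pow_card_sub_X : (X ^ Fintype.card F - X : F[X]).Splits := by
  rw [splits_iff_card_roots, FiniteField.roots_X_pow_card_sub_X,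
    FiniteField.X_pow_card_sub_X_natDegree_eq _ Fintype.one_lt_card, card_val, card_univ]

lemma X_pow_sub_C_dvd_X_pow_card_sub_X {d t : ℕ} (hdt : Fintype.card F - 1 = d * t) {b : F}
    (hb : b ^ d = 1) : X ^ t - C b ∣ X ^ Fintype.card F - X := by
  have hq : Fintype.card F = d * t + 1 := by have := Fintype.card_pos (α := F); omega
  have h := sub_dvd_pow_sub_pow ((X : F[X]) ^ t) (C b) d
  rw [← C_pow, hb, C_1, ← pow_mul, mul_comm] at h
  rw [hq, pow_succ, ← sub_one_mul]
  exact h.mul_right X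

lemma prod_nthRootsFinset_X_sub_C {d t : ℕ} (hdt : Fintype.card F - 1 = d * t) {b : F}
    (hb : b ^ d = 1) : ∏ β ∈ nthRootsFinset t b, (X - C β) = X ^ t - C b := by
  classical
  have ht := pos_of_mul_eq_card_sub_one hdt
  have hdvd := X_pow_sub_C_dvd_X_pow_card_sub_X hdt hb
  have hne := FiniteField.X_pow_card_sub_X_ne_zero F (Fintype.one_lt_card (α := F))
  have hnodup : (nthRoots t b).Nodup := by
    refine Multiset.nodup_of_le (roots.le_of_dvd hne hdvd) ?_
    rw [FiniteField.roots_X_pow_card_sub_X]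
    exact univ.nodup
  rw [prod_eq_multiset_prod, nthRootsFinset_def, Multiset.toFinset_val, hnodup.dedup]
  exact ((splits_X_pow_card_sub_X.of_dvd hne hdvd).eq_prod_roots_of_monic
    (monic_X_pow_sub_C b ht.ne')).symm

variable [DecidableEq F] {d t : ℕ} (hdt : Fintype.card F - 1 = d * t) {S : Finset F}
  (hS : ∀ b ∈ S, b ^ d = 1)
include hdt hS

lemma prod_biUnion_nthRootsFinset_X_sub_C :
    ∏ β ∈ S.biUnion (nthRootsFinset t ·), (X - C β) = (∏ b ∈ S, (X - C b)).comp (X ^ t) := by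
  have ht := pos_of_mul_eq_card_sub_one hdt
  rw [prod_biUnion, Polynomial.prod_comp]
  · refine prod_congr rfl fun b hb => ?_
    rw [prod_nthRootsFinset_X_sub_C hdt (hS b hb), sub_comp, X_comp, C_comp]
  · intro b₁ _ b₂ _ hne
    simp only [Function.onFun, disjoint_left, mem_nthRootsFinset ht]
    rintro β rfl rfl
    exact hne rfl

lemma card_biUnion_nthRootsFinset : (S.biUnion (nthRootsFinset t ·)).card = S.card * t := by
  have := congrArg natDegree (prod_biUnion_nthRootsFinset_X_sub_C hdt hS)
  rwa [natDegree_finsetProd_X_sub_C_eq_card, natDegree_comp,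
    natDegree_finsetProd_X_sub_C_eq_card, natDegree_X_pow] at this

lemma deltaS_biUnion_nthRootsFinset {α : F} (hα : α ∈ S.biUnion (nthRootsFinset t ·)) :
    deltaS (S.biUnion (nthRootsFinset t ·)) α = t * α ^ (t - 1) * deltaS S (α ^ t) := by
  have hαt : α ^ t ∈ S := by
    obtain ⟨b, hb, hαb⟩ := mem_biUnion.mp hα
    rwa [(mem_nthRootsFinset (pos_of_mul_eq_card_sub_one hdt) b).mp hαb]
  rw [deltaS_eq_eval_derivative hα, prod_biUnion_nthRootsFinset_X_sub_C hdt hS, derivative_comp,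
    eval_mul, eval_comp, eval_X_pow, ← deltaS_eq_eval_derivative hαt, derivative_X_pow]
  simp

end FiniteField

section Subfield

variable {E F : Type*} [Field E] [Fintype E] [Field F] [Fintype F]

lemma nonempty_ringHom_of_card_eq_pow {s : ℕ} (h : Fintype.card F = Fintype.card E ^ s) :
    Nonempty (E →+* F) := by
  obtain ⟨p, hcharE, n, hp, hE⟩ := FiniteField.card' E
  have := Fact.mk hp
  have : CharP F p := charP_of_card_eq_prime_pow (by rw [h, hE, ← pow_mul])
  let := ZMod.algebra E p
  let := ZMod.algebra F p
  have hfin : Module.finrank (ZMod p) F = Module.finrank (ZMod p) E * s := by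
    apply Nat.pow_right_injective hp.two_le
    simp only [FiniteField.pow_finrank_eq_card, pow_mul, h]
  obtain ⟨f⟩ := FiniteField.nonempty_algHom_of_finrank_dvd (Dvd.intro s hfin.symm)
  exact ⟨f.toRingHom⟩

variable (φ : E →+* F) {t : ℕ} (hcard : Fintype.card F - 1 = (Fintype.card E - 1) * t)
include φ hcard

lemma natCast_eq_one_of_card_sub_one_eq : (t : F) = 1 := by
  have h := congrArg (Nat.cast : ℕ → F) hcard
  push_cast [Nat.cast_sub Fintype.card_pos] at h
  rw [FiniteField.cast_card_eq_zero, ← map_natCast φ, FiniteField.cast_card_eq_zero,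
    map_zero] at h
  linear_combination h

lemma isSquare_map_iff (hF : ringChar F ≠ 2) (ht : Odd t) (x : E) :
    IsSquare (φ x) ↔ IsSquare x := by
  rcases eq_or_ne x 0 with rfl | hx
  · simp
  have hE : ringChar E ≠ 2 := by
    have := charP_of_injective_ringHom φ.injective (ringChar E)
    rwa [← ringChar.eq F (ringChar E)]
  have hhalf : Fintype.card F / 2 = Fintype.card E / 2 * t := by
    have hF' := Nat.two_mul_odd_div_two (FiniteField.odd_card_of_char_ne_two hF)
    have hE' := Nat.two_mul_odd_div_two (FiniteField.odd_card_of_char_ne_two hE)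
    apply Nat.eq_of_mul_eq_mul_left two_pos
    rw [hF', hcard, ← hE', mul_assoc]
  have key : φ x ^ (Fintype.card F / 2) = φ (x ^ (Fintype.card E / 2)) := by
    rw [hhalf, pow_mul, ← map_pow]
    rcases FiniteField.pow_dichotomy hE hx with h | h <;> simp [h, ht.neg_one_pow]
  rw [FiniteField.isSquare_iff hF ((map_ne_zero φ).mpr hx), FiniteField.isSquare_iff hE hx, key,
    map_eq_one_iff φ φ.injective]

end Subfield

lemma isSquare_sq_mul_iff {K : Type*} [Field K] {u : K} (hu : u ≠ 0) (x : K) :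
    IsSquare (u ^ 2 * x) ↔ IsSquare x :=
  ⟨fun h => by simpa [hu] using h.div (IsSquare.sq u), (IsSquare.sq u).mul⟩

section Lift

variable {E F : Type*} [Field E] [Fintype E] [DecidableEq E] [Field F] [Fintype F]
  [DecidableEq F] (φ : E →+* F) {t : ℕ} (hcard : Fintype.card F - 1 = (Fintype.card E - 1) * t)
  (ht : Odd t)
include φ hcard ht

lemma exists_lift_deltaS_eq_sq_mul {S : Finset E} (hS : S.card < Fintype.card E) :
    ∃ S' : Finset F, S'.card = S.card * t ∧
      ∀ α ∈ S', ∃ a ∈ S, ∃ u : F, u ≠ 0 ∧ deltaS S' α = u ^ 2 * φ (deltaS S a) := by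
  obtain ⟨c, -, hc⟩ :=
    exists_mem_notMem_of_card_lt_card (s := S) (t := univ) (by rwa [card_univ])
  set S₀ := (S.image (· - c)).image φ
  have hS₀ : ∀ b ∈ S₀, b ^ (Fintype.card E - 1) = 1 := by
    simp only [S₀, mem_image]
    rintro _ ⟨_, ⟨a, ha, rfl⟩, rfl⟩
    have hac : a - c ≠ 0 := sub_ne_zero_of_ne (ne_of_mem_of_not_mem ha hc)
    rw [← map_pow, FiniteField.pow_card_sub_one_eq_one _ hac, map_one]
  refine ⟨S₀.biUnion (nthRootsFinset t ·), ?_, fun α hα => ?_⟩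
  · rw [card_biUnion_nthRootsFinset hcard hS₀, card_image_of_injective _ φ.injective,
      card_image_of_injective _ sub_left_injective]
  obtain ⟨b, hb, hαb⟩ := mem_biUnion.mp hα
  rw [mem_nthRootsFinset ht.pos] at hαb
  obtain ⟨_, ⟨a, ha, rfl⟩, rfl⟩ := by simpa only [S₀, mem_image] using hb
  have hα₀ : α ≠ 0 := by
    rintro rfl
    rw [zero_pow ht.pos.ne', eq_comm, map_eq_zero, sub_eq_zero] at hαb
    exact hc (hαb ▸ ha)
  refine ⟨a, ha, α ^ (t / 2), pow_ne_zero _ hα₀, ?_⟩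
  rw [deltaS_biUnion_nthRootsFinset hcard hS₀ hα, natCast_eq_one_of_card_sub_one_eq φ hcard,
    one_mul, hαb, deltaS_image_ringHom, deltaS_image_sub_const, ← pow_mul, Nat.mul_comm,
    Nat.two_mul_odd_div_two (Nat.odd_iff.mp ht)]

lemma exists_lift_isSquare_deltaS_iff (hF : ringChar F ≠ 2) {S : Finset E}
    (hS : S.card < Fintype.card E) :
    ∃ S' : Finset F, S'.card = S.card * t ∧ ∀ α ∈ S', ∃ a ∈ S,
      (IsSquare (deltaS S' α) ↔ IsSquare (deltaS S a)) ∧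
      (IsSquare (-deltaS S' α) ↔ IsSquare (-deltaS S a)) := by
  obtain ⟨S', hcard', hS'⟩ := exists_lift_deltaS_eq_sq_mul φ hcard ht hS
  refine ⟨S', hcard', fun α hα => ?_⟩
  obtain ⟨a, ha, u, hu, hδ⟩ := hS' α hα
  refine ⟨a, ha, ?_, ?_⟩
  · rw [hδ, isSquare_sq_mul_iff hu, isSquare_map_iff φ hcard hF ht]
  · rw [hδ, ← mul_neg, ← map_neg, isSquare_sq_mul_iff hu, isSquare_map_iff φ hcard hF ht]

lemma SigmaG.lift (hF : ringChar F ≠ 2) {l : ℕ} (hl : l < Fintype.card E) (h : SigmaG E l) :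
    SigmaG F (l * t) := by
  obtain ⟨hl_even, hl_two, S, rfl, hS⟩ := h
  obtain ⟨S', hS'card, hS'⟩ := exists_lift_isSquare_deltaS_iff φ hcard ht hF hl
  refine ⟨hl_even.mul_right t, le_mul_of_le_of_one_le hl_two ht.pos, S', hS'card, ?_⟩
  rcases hS with hS | hS
  · refine .inl fun α hα => ?_
    obtain ⟨a, ha, h, -⟩ := hS' α hα
    exact h.mpr (hS a ha)
  · refine .inr fun α hα => ?_
    obtain ⟨a, ha, h, -⟩ := hS' α hα
    exact mt h.mp (hS a ha)

lemma SigmaEG.lift (hF : ringChar F ≠ 2) {l : ℕ} (hl_odd : Odd l) (hl : l < Fintype.card E)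
    (h : SigmaEG E (l + 1)) : SigmaEG F (l * t + 1) := by
  obtain ⟨-, -, S, hS_card, hS⟩ := h
  rw [Nat.add_sub_cancel] at hS_card
  subst hS_card
  obtain ⟨S', hS'card, hS'⟩ := exists_lift_isSquare_deltaS_iff φ hcard ht hF hl
  refine ⟨(hl_odd.mul ht).add_one, by have := (hl_odd.mul ht).pos; omega, S',
    by rw [hS'card, Nat.add_sub_cancel], fun α hα => ?_⟩
  obtain ⟨a, ha, -, h⟩ := hS' α hα
  exact h.mpr (hS a ha)

end Lift

lemma odd_geom_sum {r s : ℕ} (hr : Odd r) (hs : Odd s) : Odd (∑ i ∈ range s, r ^ i) := by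
  rwa [odd_sum_iff_odd_card_odd, filter_true_of_mem fun i _ => hr.pow, card_range]

theorem stmt_18_general (p m s : ℕ) (hp : p.Prime) (hodd : p ≠ 2) (hso : Odd s)
    (r : ℕ) (hr : r = p ^ m)
    (F E : Type*) [Field F] [Fintype F] [DecidableEq F] [Field E] [Fintype E] [DecidableEq E]
    (hF : Fintype.card F = r ^ s) (hE : Fintype.card E = r)
    (l : ℕ) (hl2 : l ≤ r - 1) :
    (Even l → SigmaG E l → SigmaG F (l * ((r ^ s - 1) / (r - 1)))) ∧
    (Odd l → SigmaEG E (l + 1) → SigmaEG F (l * ((r ^ s - 1) / (r - 1)) + 1)) := by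
  have hr_odd : Odd r := hr ▸ (hp.odd_of_ne_two hodd).pow
  have hr_two : 2 ≤ r := hE ▸ Fintype.one_lt_card
  have hF_char : ringChar F ≠ 2 := by
    rw [Ne, FiniteField.even_card_iff_char_two, hF, ← Nat.even_iff, Nat.not_even_iff_odd]
    exact hr_odd.pow
  obtain ⟨φ⟩ := nonempty_ringHom_of_card_eq_pow (hE ▸ hF : Fintype.card F = Fintype.card E ^ s)
  have hcard : Fintype.card F - 1 = (Fintype.card E - 1) * ((r ^ s - 1) / (r - 1)) := by
    rw [hF, hE, Nat.mul_div_cancel' (Nat.sub_one_dvd_pow_sub_one r s)]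
  have ht : Odd ((r ^ s - 1) / (r - 1)) := Nat.geomSum_eq hr_two s ▸ odd_geom_sum hr_odd hso
  have hl : l < Fintype.card E := by omega
  exact ⟨fun _ => SigmaG.lift φ hcard ht hF_char hl,
    fun hl_odd => SigmaEG.lift φ hcard ht hF_char hl_odd hl⟩

theorem stmt_18 (p m s : ℕ) (hp : p.Prime) (hodd : p ≠ 2) (hm : 0 < m) (hso : Odd s)
    (r : ℕ) (hr : r = p ^ m)
    (F E : Type*) [Field F] [Fintype F] [DecidableEq F] [Field E] [Fintype E] [DecidableEq E]
    (hF : Fintype.card F = r ^ s) (hE : Fintype.card E = r)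
    (l : ℕ) (hl1 : 1 ≤ l) (hl2 : l ≤ r - 1) :
    (Even l → SigmaG E l → SigmaG F (l * ((r ^ s - 1) / (r - 1)))) ∧
    (Odd l → SigmaEG E (l + 1) → SigmaEG F (l * ((r ^ s - 1) / (r - 1)) + 1)) :=
  stmt_18_general p m s hp hodd hso r hr F E hF hE l hl2
end

section
/- Let p be an odd prime and q = p^m with q ≡ 3 (mod 4), and let n be a positive integer with n ≡ 2 (mod 4). Then there is no self-dual linear code over F_q of length n; that is, no F_q-subspace C of F_q^n satisfies C = C^⊥. -/
/-!
If `C = C^⊥` in `F^n`, then `dim C = n / 2 =: k` and the dot product has a totally isotropic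
subspace of half dimension. In a basis extending one of `C` its Gram matrix is
`[[0, M], [Mᵀ, D]]`, of determinant `(-1)^k (det M)^2`; in the standard basis it is `1`. Since
the determinant of a Gram matrix changes by a square under change of basis, `(-1)^k` is a
square in `F`. For `n ≡ 2 (mod 4)` the exponent `k` is odd, and `-1` is not a square in `F_q`
when `q ≡ 3 (mod 4)`.
-/

open Matrix Module

section BlockDeterminant

variable {m R : Type*} [Fintype m] [DecidableEq m] [CommRing R]

theorem det_fromBlocks_zero_one_one_zero :
    (fromBlocks 0 1 1 0 : Matrix (m ⊕ m) (m ⊕ m) R).det = (-1) ^ Fintype.card m := by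
  have hshear : (fromBlocks 0 1 1 0 : Matrix (m ⊕ m) (m ⊕ m) R) =
      fromBlocks 1 (-1) 0 1 * fromBlocks 1 1 1 0 := by
    simp [fromBlocks_multiply]
  rw [hshear, det_mul, det_fromBlocks_zero₂₁, det_fromBlocks_one₁₁]
  simp [det_neg]

theorem det_fromBlocks_zero₁₁ (M N D : Matrix m m R) :
    (fromBlocks 0 M N D).det = (-1) ^ Fintype.card m * M.det * N.det := by
  have hswap : (fromBlocks 0 1 1 0 : Matrix (m ⊕ m) (m ⊕ m) R) * fromBlocks 0 M N D =
      fromBlocks N D 0 M := by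
    simp [fromBlocks_multiply]
  have h := congrArg det hswap
  rw [det_mul, det_fromBlocks_zero_one_one_zero, det_fromBlocks_zero₂₁] at h
  calc (fromBlocks 0 M N D).det
      = (-1) ^ Fintype.card m * ((-1) ^ Fintype.card m * (fromBlocks 0 M N D).det) := by
        rw [← mul_assoc, ← mul_pow]
        simp
    _ = (-1) ^ Fintype.card m * M.det * N.det := by rw [h]; ring

end BlockDeterminant

theorem Submodule.exists_basis_sum_inl_mem {K V : Type*} [Field K] [AddCommGroup V]
    [Module K V] [FiniteDimensional K V] (W : Submodule K V)
    (hW : 2 * finrank K W = finrank K V) :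
    ∃ c : Basis (Fin (finrank K W) ⊕ Fin (finrank K W)) K V, ∀ i, c (Sum.inl i) ∈ W := by
  obtain ⟨W', hWW'⟩ := W.exists_isCompl
  have hW' : finrank K W' = finrank K W := by
    have := Submodule.finrank_add_eq_of_isCompl hWW'
    omega
  refine ⟨((finBasisOfFinrankEq K W rfl).prod (finBasisOfFinrankEq K W' hW')).map
    (Submodule.prodEquivOfIsCompl W W' hWW'), fun i => ?_⟩
  simp [Submodule.coe_prodEquivOfIsCompl']

namespace LinearMap.BilinForm

section CommRing

variable {R M ι : Type*} [CommRing R] [AddCommGroup M] [Module R M] [Fintype ι] [DecidableEq ι]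

theorem toMatrix_reindex {κ : Type*} [Fintype κ] [DecidableEq κ]
    (B : LinearMap.BilinForm R M) (b : Basis ι R M) (e : ι ≃ κ) :
    toMatrix (b.reindex e) B = reindex e e (toMatrix b B) := by
  ext i j
  simp [toMatrix_apply]

theorem det_toMatrix_eq_sq_mul (B : LinearMap.BilinForm R M) (b c : Basis ι R M) :
    (toMatrix c B).det = (b.toMatrix c).det ^ 2 * (toMatrix b B).det := by
  rw [← toMatrix_mul_basis_toMatrix b c, det_mul, det_mul, det_transpose]
  ring

theorem isSquare_neg_one_pow_mul_det_toMatrix {m : Type*} [Fintype m] [DecidableEq m]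
    {B : LinearMap.BilinForm R M} (hB : B.IsSymm) (c : Basis (m ⊕ m) R M)
    (hc : ∀ i j, B (c (Sum.inl i)) (c (Sum.inl j)) = 0) :
    IsSquare ((-1) ^ Fintype.card m * (toMatrix c B).det) := by
  set G := toMatrix c B
  have h11 : G.toBlocks₁₁ = 0 := by
    ext i j
    simpa [G, toBlocks₁₁, toMatrix_apply] using hc i j
  have hsymm : G.IsSymm := (isSymm_toMatrix_iff_isSymm c).mpr hB
  rw [← fromBlocks_toBlocks G, h11] at hsymm ⊢
  obtain ⟨-, h21, -, -⟩ := isSymm_fromBlocks_iff.mp hsymm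
  refine ⟨G.toBlocks₁₂.det, ?_⟩
  rw [det_fromBlocks_zero₁₁, ← h21, det_transpose, ← mul_assoc, ← mul_assoc, ← mul_pow]
  simp

end CommRing

section Field

variable {K V : Type*} [Field K] [AddCommGroup V] [Module K V] [FiniteDimensional K V]

theorem two_mul_finrank_eq_of_orthogonal_eq_self {B : LinearMap.BilinForm K V}
    (hB : B.Nondegenerate) {W : Submodule K V} (hW : B.orthogonal W = W) :
    2 * finrank K W = finrank K V := by
  have h := finrank_orthogonal hB W
  rw [hW] at h
  have := W.finrank_le
  omega

theorem isSquare_neg_one_pow_mul_det_of_le_orthogonal {ι : Type*} [Fintype ι] [DecidableEq ι]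
    {B : LinearMap.BilinForm K V} (hB : B.IsSymm) (b : Basis ι K V) {W : Submodule K V}
    (hWW : W ≤ B.orthogonal W) (hW : 2 * finrank K W = finrank K V) :
    IsSquare ((-1) ^ finrank K W * (toMatrix b B).det) := by
  obtain ⟨c, hc⟩ := W.exists_basis_sum_inl_mem hW
  obtain ⟨s, hs⟩ := isSquare_neg_one_pow_mul_det_toMatrix hB c fun i j => hWW (hc j) _ (hc i)
  rw [Fintype.card_fin] at hs
  have e : ι ≃ Fin (finrank K W) ⊕ Fin (finrank K W) :=
    Fintype.equivOfCardEq (by simp [← finrank_eq_card_basis b, ← hW, two_mul])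
  set b' := b.reindex e
  have hP : (b'.toMatrix c).det ≠ 0 :=
    letI := b'.invertibleToMatrix c
    (isUnit_det_of_invertible _).ne_zero
  refine ⟨s / (b'.toMatrix c).det, ?_⟩
  rw [div_mul_div_comm, ← hs, det_toMatrix_eq_sq_mul B b' c, toMatrix_reindex, det_reindex_self]
  field_simp

end Field

end LinearMap.BilinForm

open LinearMap.BilinForm

theorem stmt_19_general (p m : ℕ)
    (F : Type*) [Field F] [Fintype F] (hF : Fintype.card F = p ^ m)
    (hq3 : p ^ m % 4 = 3)
    (n : ℕ) (hn : n % 4 = 2) :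
    ¬ ∃ C : Submodule F (Fin n → F),
        (C : Set (Fin n → F)) = {v | ∀ c ∈ C, ∑ i, v i * c i = 0} := by
  rintro ⟨C, hC⟩
  set B := (1 : Matrix (Fin n) (Fin n) F).toBilin'
  have hself : B.orthogonal C = C := by
    ext v
    rw [mem_orthogonal_iff, ← SetLike.mem_coe, hC]
    simp [B, toBilin'_apply', dotProduct, mul_comm]
  have hdim := two_mul_finrank_eq_of_orthogonal_eq_self
    (nondegenerate_toBilin'_of_det_ne_zero' 1 (by simp)) hself
  have hodd : Odd (finrank F C) := Nat.odd_iff.mpr (by rw [finrank_fin_fun] at hdim; omega)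
  have hsq := isSquare_neg_one_pow_mul_det_of_le_orthogonal
    (isSymm_toBilin'_iff_isSymm.mpr isSymm_one) (Pi.basisFun F (Fin n)) hself.ge hdim
  rw [toMatrix_basisFun, toMatrix'_toBilin', det_one, mul_one, hodd.neg_one_pow] at hsq
  exact FiniteField.isSquare_neg_one_iff.mp hsq (hF ▸ hq3)

theorem stmt_19 (p m : ℕ) (hp : p.Prime) (hodd : p ≠ 2) (hm : 0 < m)
    (F : Type*) [Field F] [Fintype F] (hF : Fintype.card F = p ^ m)
    (hq3 : p ^ m % 4 = 3)
    (n : ℕ) (hn0 : 0 < n) (hn : n % 4 = 2) :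
    ¬ ∃ C : Submodule F (Fin n → F),
        (C : Set (Fin n → F)) = {v | ∀ c ∈ C, ∑ i, v i * c i = 0} :=
  stmt_19_general p m F hF hq3 n hn
end
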